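/- arXiv:2602.10468 — 4 statements merged into one kernel-verified Lean document; each statement's English description precedes it below -/
import Mathlib

section
/- Fix integers n ≥ 2 and d ≥ 1 and reals R > 0 and T > 0. Let σ₁, …, σ_d be permutations of Fin n (one per configured topology of out-degree 1) and let S₁, …, S_d be finite sets of positive integers (the hop counts used on each topology). Suppose that for some fixed node x, every node y ≠ x satisfies y = σᵢʰ(x) for some index i and some h ∈ Sᵢ (i.e., the strategy delivers x's data to every other node, where taking h hops on topology i reaches σᵢʰ(x)). Then the total completion time satisfies d·R + T·(∑_{i=1}^{d} ∑_{h ∈ Sᵢ} h) ≥ d·R + T·(d·q(q+1)/2 + u·(q+1)), where q = ⌊(n−1)/d⌋ and u = (n−1) mod d. -/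
/-!
Every node other than `x` is reached by some hop count, so the sets `S i` contain at least
`N = n - 1` hop counts in total. A set of positive integers has at least `#s - t` elements
larger than `t`, and `∑_{h ∈ s} h` counts each `h` once for every `t < h`. Summing over the
thresholds `t = 0, …, q` and over the `d` topologies gives
`∑ᵢ ∑_{h ∈ Sᵢ} h ≥ ∑_{t ≤ q} (N - d t)`, which equals `d · q(q+1)/2 + u(q+1)`
for `N = d q + u`.
-/

open Finset

lemma card_sub_one_le_sum_card_of_covers {α ι : Type*} [Fintype α] [DecidableEq α]
    [Fintype ι] (S : ι → Finset ℕ) (f : ι → ℕ → α) (x : α)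
    (hcover : ∀ y, y ≠ x → ∃ i, ∃ h ∈ S i, y = f i h) :
    Fintype.card α - 1 ≤ ∑ i, #(S i) := by
  have hsub : ({x}ᶜ : Finset α) ⊆ univ.biUnion fun i ↦ (S i).image (f i) := by
    intro y hy
    obtain ⟨i, h, hh, rfl⟩ := hcover y (by simpa using hy)
    exact mem_biUnion.mpr ⟨i, mem_univ i, mem_image_of_mem _ hh⟩
  calc Fintype.card α - 1 = #({x}ᶜ : Finset α) := by simp [card_compl]
    _ ≤ #(univ.biUnion fun i ↦ (S i).image (f i)) := card_le_card hsub
    _ ≤ ∑ i, #((S i).image (f i)) := card_biUnion_le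
    _ ≤ ∑ i, #(S i) := sum_le_sum fun i _ ↦ card_image_le

namespace Finset

lemma card_sub_le_card_filter_lt {s : Finset ℕ} (hs : 0 ∉ s) (t : ℕ) :
    #s - t ≤ #{h ∈ s | t < h} := by
  have hsmall : #{h ∈ s | ¬t < h} ≤ t := by
    calc #{h ∈ s | ¬t < h} ≤ #(Icc 1 t) := card_le_card fun h hh ↦ by
          simp only [mem_filter, not_lt] at hh
          exact mem_Icc.mpr ⟨Nat.one_le_iff_ne_zero.mpr fun h0 ↦ hs (h0 ▸ hh.1), hh.2⟩
      _ = t := by simp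
  have := card_filter_add_card_filter_not (s := s) (fun h ↦ t < h)
  omega

lemma sum_range_card_filter_lt_le_sum (s : Finset ℕ) (m : ℕ) :
    ∑ t ∈ range m, #{h ∈ s | t < h} ≤ ∑ h ∈ s, h := by
  calc ∑ t ∈ range m, #{h ∈ s | t < h} = ∑ h ∈ s, #{t ∈ range m | t < h} := by
        simp only [card_filter]
        exact sum_comm
    _ ≤ ∑ h ∈ s, #(range h) := sum_le_sum fun h _ ↦ card_le_card fun t ht ↦ by
        simp only [mem_filter, mem_range] at ht ⊢
        exact ht.2
    _ = ∑ h ∈ s, h := by simp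

lemma sum_range_card_sub_le_sum {s : Finset ℕ} (hs : 0 ∉ s) (m : ℕ) :
    ∑ t ∈ range m, (#s - t) ≤ ∑ h ∈ s, h :=
  (sum_le_sum fun t _ ↦ card_sub_le_card_filter_lt hs t).trans
    (sum_range_card_filter_lt_le_sum s m)

end Finset

lemma sum_range_sum_card_sub_mul_le {ι : Type*} [Fintype ι] (S : ι → Finset ℕ)
    (hS : ∀ i, 0 ∉ S i) (m : ℕ) :
    ∑ t ∈ range m, (∑ i, #(S i) - Fintype.card ι * t) ≤ ∑ i, ∑ h ∈ S i, h := by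
  have htsub (t : ℕ) : ∑ i, #(S i) - Fintype.card ι * t ≤ ∑ i, (#(S i) - t) := by
    rw [tsub_le_iff_right]
    calc ∑ i, #(S i) ≤ ∑ i, (#(S i) - t + t) := sum_le_sum fun i _ ↦ le_tsub_add
      _ = ∑ i, (#(S i) - t) + Fintype.card ι * t := by
        rw [sum_add_distrib, sum_const, card_univ, smul_eq_mul]
  calc ∑ t ∈ range m, (∑ i, #(S i) - Fintype.card ι * t)
      ≤ ∑ t ∈ range m, ∑ i, (#(S i) - t) := sum_le_sum fun t _ ↦ htsub t
    _ = ∑ i, ∑ t ∈ range m, (#(S i) - t) := sum_comm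
    _ ≤ ∑ i, ∑ h ∈ S i, h := sum_le_sum fun i _ ↦ sum_range_card_sub_le_sum (hS i) m

lemma sum_range_sub_mul_eq (N d : ℕ) :
    ∑ t ∈ range (N / d + 1), (N - d * t) =
      d * (N / d * (N / d + 1) / 2) + N % d * (N / d + 1) := by
  set q := N / d
  have hN : d * q + N % d = N := Nat.div_add_mod N d
  have hterm : ∀ t ∈ range (q + 1), N - d * t = d * (q - t) + N % d := by
    intro t ht
    have ht : t ≤ q := Nat.lt_succ_iff.mp (mem_range.mp ht)
    have : d * t + d * (q - t) = d * q := by rw [← Nat.mul_add, Nat.add_sub_cancel' ht]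
    omega
  have hreflect : ∑ t ∈ range (q + 1), (q - t) = ∑ t ∈ range (q + 1), t := by
    simpa using sum_range_reflect (fun t ↦ t) (q + 1)
  rw [sum_congr rfl hterm, sum_add_distrib, ← mul_sum, hreflect, sum_range_id, sum_const,
    card_range, smul_eq_mul, Nat.add_sub_cancel, Nat.mul_comm (q + 1) q, Nat.mul_comm (q + 1)]

lemma balanced_hop_sum_le_sum_sum {ι : Type*} [Fintype ι] (S : ι → Finset ℕ)
    (hS : ∀ i, 0 ∉ S i) {N : ℕ} (hN : N ≤ ∑ i, #(S i)) :
    Fintype.card ι * (N / Fintype.card ι * (N / Fintype.card ι + 1) / 2) +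
        N % Fintype.card ι * (N / Fintype.card ι + 1) ≤ ∑ i, ∑ h ∈ S i, h := by
  rw [← sum_range_sub_mul_eq]
  exact (sum_le_sum fun t _ ↦ Nat.sub_le_sub_right hN _).trans
    (sum_range_sum_card_sub_mul_le S hS _)

theorem total_cost_lower_bound_general
    (n d : ℕ)
    (R T : ℝ) (hT : 0 < T)
    (σ : Fin d → Equiv.Perm (Fin n))
    (S : Fin d → Finset ℕ) (hS : ∀ i, 0 ∉ S i)
    (x : Fin n)
    (hcover : ∀ y : Fin n, y ≠ x → ∃ i : Fin d, ∃ h ∈ S i, y = ((σ i) ^ h) x) :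
    (d : ℝ) * R + T * (∑ i : Fin d, ∑ h ∈ S i, (h : ℝ)) ≥
      (d : ℝ) * R +
        T * ((d * (((n - 1) / d) * ((n - 1) / d + 1) / 2) +
          ((n - 1) % d) * ((n - 1) / d + 1) : ℕ) : ℝ) := by
  have hcard : n - 1 ≤ ∑ i, #(S i) := by
    simpa using card_sub_one_le_sum_card_of_covers S (fun i h ↦ (σ i ^ h) x) x hcover
  have key := balanced_hop_sum_le_sum_sum S hS hcard
  rw [Fintype.card_fin] at key
  have hcast : ((d * ((n - 1) / d * ((n - 1) / d + 1) / 2) + (n - 1) % d * ((n - 1) / d + 1)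
      : ℕ) : ℝ) ≤ ∑ i, ∑ h ∈ S i, (h : ℝ) := by
    simpa only [Nat.cast_sum] using Nat.cast_le (α := ℝ) |>.mpr key
  exact add_le_add_right (mul_le_mul_of_nonneg_left hcast hT.le) _

/-- **Lower bound on total completion time for degree-1 strategies.**
Fix `n ≥ 2`, `d ≥ 1`, reals `R > 0`, `T > 0`. Given `d` permutations of `Fin n`
(one per topology) and hop-count sets `S i` of positive integers, if the strategy
delivers `x`'s data to every other node (every `y ≠ x` equals `(σ i)^h x` for some
`i` and `h ∈ S i`), then
`d·R + T·∑ᵢ ∑_{h ∈ Sᵢ} h ≥ d·R + T·(d·q(q+1)/2 + u·(q+1))`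
where `q = ⌊(n−1)/d⌋` and `u = (n−1) mod d`. -/
theorem total_cost_lower_bound
    (n d : ℕ) (hn : 2 ≤ n) (hd : 1 ≤ d)
    (R T : ℝ) (hR : 0 < R) (hT : 0 < T)
    (σ : Fin d → Equiv.Perm (Fin n))
    (S : Fin d → Finset ℕ) (hS : ∀ i, 0 ∉ S i)
    (x : Fin n)
    (hcover : ∀ y : Fin n, y ≠ x → ∃ i : Fin d, ∃ h ∈ S i, y = ((σ i) ^ h) x) :
    (d : ℝ) * R + T * (∑ i : Fin d, ∑ h ∈ S i, (h : ℝ)) ≥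
      (d : ℝ) * R +
        T * ((d * (((n - 1) / d) * ((n - 1) / d + 1) / 2) +
          ((n - 1) % d) * ((n - 1) / d + 1) : ℕ) : ℝ) :=
  total_cost_lower_bound_general n d R T hT σ S hS x hcover
end

section
/- Let n ≥ 2 and d ≥ 1 be integers and let s : Fin d → ℕ satisfy ∑_{i} s_i ≥ n − 1. Then ∑_{i} s_i(s_i+1)/2 ≥ d·q(q+1)/2 + u·(q+1), where q = ⌊(n−1)/d⌋ and u = (n−1) mod d. -/
lemma tangent_int (s q : ℤ) : q*(q+1) + 2*(s-q)*(q+1) ≤ s*(s+1) := by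
  have h : 0 ≤ (s - q) * (s - q - 1) := by
    rcases le_or_gt s q with h | h
    · exact mul_nonneg_iff.2 (Or.inr ⟨by omega, by omega⟩)
    · exact mul_nonneg (by omega) (by omega)
  nlinarith

/-- If `s : Fin d → ℕ` satisfies `∑ i, s i ≥ n − 1`, then the sum of the triangular
numbers `s i (s i + 1)/2` is at least `d·q(q+1)/2 + u·(q+1)`, where `q = ⌊(n−1)/d⌋`
and `u = (n−1) mod d`. -/
theorem triangular_sum_lower_bound
    (n d : ℕ) (hn : 2 ≤ n) (hd : 1 ≤ d)
    (s : Fin d → ℕ) (hs : ∑ i : Fin d, s i ≥ n - 1) :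
    ∑ i : Fin d, s i * (s i + 1) / 2 ≥
      d * (((n - 1) / d) * ((n - 1) / d + 1) / 2) + ((n - 1) % d) * ((n - 1) / d + 1) := by
  set q := (n - 1) / d with hq
  set u := (n - 1) % d with hu
  have hmod : d * q + u = n - 1 := Nat.div_add_mod (n - 1) d
  -- key doubled inequality
  have key : d * (q * (q + 1)) + 2 * u * (q + 1) ≤ ∑ i : Fin d, s i * (s i + 1) := by
    have hZ : (d : ℤ) * (q * (q + 1)) + 2 * u * (q + 1)
        ≤ ∑ i : Fin d, (s i : ℤ) * (s i + 1) := by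
      have h1 : ∀ i : Fin d,
          (q : ℤ)*(q+1) + 2*((s i : ℤ) - q)*(q+1) ≤ (s i : ℤ)*(s i + 1) :=
        fun i => tangent_int _ _
      have h2 := Finset.sum_le_sum (s := (Finset.univ : Finset (Fin d))) (fun i _ => h1 i)
      have hsum : ((n : ℤ) - 1) ≤ ∑ i : Fin d, (s i : ℤ) := by
        have : ((n - 1 : ℕ) : ℤ) ≤ ((∑ i : Fin d, s i : ℕ) : ℤ) := by exact_mod_cast hs
        push_cast at this ⊢
        omega
      have hmodZ : (d : ℤ) * q + u = (n : ℤ) - 1 := by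
        have := hmod
        have hn1 : 1 ≤ n := by omega
        push_cast [← this]
        ring_nf
        omega
      have hcard : ∑ _i : Fin d, ((q : ℤ)*(q+1)) = d * (q*(q+1)) := by
        simp [Finset.sum_const, mul_comm]
      calc (d : ℤ) * (q * (q + 1)) + 2 * u * (q + 1)
          ≤ ∑ i : Fin d, ((q : ℤ)*(q+1) + 2*((s i : ℤ) - q)*(q+1)) := by
            rw [Finset.sum_add_distrib, hcard, ← Finset.sum_mul, ← Finset.mul_sum,
              Finset.sum_sub_distrib]
            have : (u : ℤ) ≤ (∑ i : Fin d, (s i : ℤ)) - ∑ _i : Fin d, (q : ℤ) := by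
              simp only [Finset.sum_const, Finset.card_univ, Fintype.card_fin, nsmul_eq_mul]
              omega
            nlinarith [this, (by positivity : (0:ℤ) ≤ (q:ℤ) + 1)]
        _ ≤ _ := h2
    exact_mod_cast hZ
  -- now relate divisions
  have heven : ∀ m : ℕ, 2 * (m * (m + 1) / 2) = m * (m + 1) := fun m => by
    obtain ⟨k, hk⟩ := Nat.even_mul_succ_self m
    omega
  have hdouble : 2 * (∑ i : Fin d, s i * (s i + 1) / 2) = ∑ i : Fin d, s i * (s i + 1) := by
    rw [Finset.mul_sum]
    exact Finset.sum_congr rfl fun i _ => heven (s i)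
  have hgoal2 : 2 * (d * (q * (q + 1) / 2) + u * (q + 1))
      ≤ 2 * (∑ i : Fin d, s i * (s i + 1) / 2) := by
    rw [hdouble]
    calc 2 * (d * (q * (q + 1) / 2) + u * (q + 1))
        = d * (2 * (q * (q + 1) / 2)) + 2 * u * (q + 1) := by ring
      _ = d * (q * (q + 1)) + 2 * u * (q + 1) := by rw [heven q]
      _ ≤ _ := key
  omega
end

section
/- Let n ≥ 2, let σ be a permutation of Fin n that is an n-cycle, and let m be an integer with 0 ≤ m ≤ n − 1. Then ∑_{h=1}^{m} P_{σʰ} + ∑_{h=1}^{n−1−m} P_{(σ⁻¹)ʰ} = J − I. That is, the all-to-all traffic matrix decomposes exactly across two topologies — the base n-cycle σ used for hop counts 1, …, m and the (n−1)-shifted topology σ⁻¹ used for hop counts 1, …, n−1−m. -/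
/-- The permutation matrix of `σ`: `(P_σ)_{u,v} = 1` if `v = σ u` and `0` otherwise. -/
def permMatrix {n : ℕ} (σ : Equiv.Perm (Fin n)) : Matrix (Fin n) (Fin n) ℕ :=
  Matrix.of fun u v => if v = σ u then 1 else 0

/-- The all-to-all traffic matrix `J − I`: off-diagonal entries `1`, diagonal `0`. -/
def allToAll (n : ℕ) : Matrix (Fin n) (Fin n) ℕ :=
  Matrix.of fun u v => if u = v then 0 else 1

/-- For an `n`-cycle `σ` and any `0 ≤ m ≤ n − 1`, the all-to-all traffic matrix
decomposes exactly across the base cycle `σ` (hop counts `1, …, m`) and its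
`(n−1)`-shifted topology `σ⁻¹` (hop counts `1, …, n−1−m`):
`∑_{h=1}^{m} P_{σʰ} + ∑_{h=1}^{n−1−m} P_{(σ⁻¹)ʰ} = J − I`. -/
theorem two_topology_shifted_decomposition
    (n : ℕ) (hn : 2 ≤ n) (σ : Equiv.Perm (Fin n))
    (hcyc : σ.IsCycle) (hsupp : σ.support = Finset.univ)
    (m : ℕ) (hm : m ≤ n - 1) :
    ∑ h ∈ Finset.Icc 1 m, permMatrix (σ ^ h) +
      ∑ h ∈ Finset.Icc 1 (n - 1 - m), permMatrix (σ⁻¹ ^ h) = allToAll n := by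
  classical
  have hord : orderOf σ = n := by
    rw [hcyc.orderOf, hsupp, Finset.card_univ, Fintype.card_fin]
  have hco : σ.IsCycleOn (Finset.univ : Finset (Fin n)) := by
    have := hcyc.isCycleOn
    have hset : {x | σ x ≠ x} = (Finset.univ : Finset (Fin n)) := by
      ext x
      simp [← Equiv.Perm.mem_support, hsupp]
    rwa [hset] at this
  have hcard : (Finset.univ : Finset (Fin n)).card = n := by simp
  -- inverse powers are forward powers
  have hinv : ∀ h ∈ Finset.Icc 1 (n - 1 - m), σ⁻¹ ^ h = σ ^ (n - h) := by
    intro h hh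
    simp only [Finset.mem_Icc] at hh
    have hhn : h ≤ n := le_trans hh.2 (by omega)
    have hone : σ ^ n = 1 := by
      have := pow_orderOf_eq_one σ
      rwa [hord] at this
    have : σ ^ (n - h) * σ ^ h = 1 := by
      rw [← pow_add, Nat.sub_add_cancel hhn, hone]
    rw [inv_pow]
    exact (eq_inv_of_mul_eq_one_left this).symm
  rw [show ∑ h ∈ Finset.Icc 1 (n - 1 - m), permMatrix (σ⁻¹ ^ h) =
      ∑ h ∈ Finset.Icc 1 (n - 1 - m), permMatrix (σ ^ (n - h)) from
    Finset.sum_congr rfl fun h hh => by rw [hinv h hh]]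
  -- reindex second sum over Ioc m (n-1)
  have hreidx : ∑ h ∈ Finset.Icc 1 (n - 1 - m), permMatrix (σ ^ (n - h)) =
      ∑ h ∈ Finset.Ioc m (n - 1), permMatrix (σ ^ h) := by
    refine Finset.sum_nbij' (fun h => n - h) (fun h => n - h) ?_ ?_ ?_ ?_ ?_
    · intro a ha; simp only [Finset.mem_Icc] at ha; simp only [Finset.mem_Ioc]; omega
    · intro a ha; simp only [Finset.mem_Ioc] at ha; simp only [Finset.mem_Icc]; omega
    · intro a ha; simp only [Finset.mem_Icc] at ha; omega
    · intro a ha; simp only [Finset.mem_Ioc] at ha; omega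
    · intro a _; rfl
  rw [hreidx]
  have hIcc : ∀ k, Finset.Icc 1 k = Finset.Ioc 0 k := fun k => rfl
  rw [hIcc m, Finset.sum_Ioc_consecutive _ (Nat.zero_le m) hm]
  -- now prove entrywise
  ext u v
  simp only [Matrix.sum_apply, allToAll, Matrix.of_apply]
  have hentry : ∀ h, permMatrix (σ ^ h) u v = if v = (σ ^ h) u then 1 else 0 := fun h => rfl
  simp only [hentry]
  rcases eq_or_ne u v with rfl | huv
  · rw [if_pos rfl]
    refine Finset.sum_eq_zero fun h hh => ?_
    simp only [Finset.mem_Ioc] at hh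
    rw [if_neg]
    intro hEq
    have := (hco.pow_apply_eq (Finset.mem_univ u)).mp hEq.symm
    rw [hcard] at this
    have := Nat.le_of_dvd (by omega) this
    omega
  · rw [if_neg huv]
    -- there is a unique hop count
    have hsc : σ.SameCycle u v := hco.2 (Finset.mem_univ u) (Finset.mem_univ v)
    obtain ⟨i, hi0, hile, hiv⟩ := hsc.exists_pow_eq''
    rw [hord] at hile
    have hone : σ ^ n = 1 := by
      have := pow_orderOf_eq_one σ
      rwa [hord] at this
    have hine : i ≠ n := by
      intro h
      rw [h, hone] at hiv
      simp at hiv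
      exact huv hiv
    refine (Finset.sum_eq_single_of_mem i ?_ ?_).trans ?_
    · simp only [Finset.mem_Ioc]; omega
    · intro h hh hne
      simp only [Finset.mem_Ioc] at hh
      rw [if_neg]
      intro hEq
      have := (hco.pow_apply_eq_pow_apply (Finset.mem_univ u)).mp (hEq.symm.trans hiv.symm)
      rw [hcard] at this
      have := Nat.ModEq.eq_of_lt_of_lt this (by omega) (by omega)
      exact hne this
    · rw [if_pos hiv.symm]
end

section
/- Fix an integer n ≥ 2 and define L_n(d) = d·q_d(q_d+1)/2 + u_d·(q_d+1) for d ≥ 1, where q_d = ⌊(n−1)/d⌋ and u_d = (n−1) mod d. Then L_n is nonincreasing in d: for every d ≥ 1, L_n(d+1) ≤ L_n(d). -/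
/-- The lower-bound function `L_n(d) = d·q(q+1)/2 + u·(q+1)` with `q = ⌊(n−1)/d⌋`
and `u = (n−1) mod d`. -/
def lowerBound (n d : ℕ) : ℕ :=
  d * (((n - 1) / d) * ((n - 1) / d + 1) / 2) + ((n - 1) % d) * ((n - 1) / d + 1)

lemma sum_div_eq (d : ℕ) (hd : 1 ≤ d) :
    ∀ m : ℕ, ∑ j ∈ Finset.range m, (j / d + 1)
      = d * ((m / d) * (m / d + 1) / 2) + (m % d) * (m / d + 1) := by
  intro m
  induction m with
  | zero => simp
  | succ m ih =>
    rw [Finset.sum_range_succ, ih]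
    set q := m / d with hq
    set u := m % d with hu
    have hud : u < d := Nat.mod_lt _ hd
    have hm : m = d * q + u := (Nat.div_add_mod m d).symm
    by_cases hcase : u + 1 < d
    · have hq1 : (m + 1) / d = q := by
        have : m + 1 = (u + 1) + q * d := by rw [hm]; ring
        rw [this, Nat.add_mul_div_right _ _ hd, Nat.div_eq_of_lt hcase]
        omega
      have hu1 : (m + 1) % d = u + 1 := by
        have : m + 1 = (u + 1) + q * d := by rw [hm]; ring
        rw [this, Nat.add_mul_mod_self_right, Nat.mod_eq_of_lt hcase]
      rw [hq1, hu1]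
      ring
    · have hd1 : u + 1 = d := by omega
      have hm1 : m + 1 = (q + 1) * d := by rw [hm, ← hd1]; ring
      have hq1 : (m + 1) / d = q + 1 := by
        rw [hm1, Nat.mul_div_cancel _ hd]
      have hu1 : (m + 1) % d = 0 := by
        rw [hm1, Nat.mul_mod_left]
      rw [hq1, hu1]
      have ha : (q + 1) * (q + 1 + 1) = q * (q + 1) + 2 * (q + 1) := by ring
      have hev : q * (q + 1) % 2 = 0 := by
        rcases Nat.even_mul_succ_self q with ⟨k, hk⟩
        omega
      have hdiv : (q + 1) * (q + 1 + 1) / 2 = q * (q + 1) / 2 + (q + 1) := by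
        omega
      rw [hdiv, ← hd1]
      ring

/-- For fixed `n ≥ 2`, the lower bound `L_n` is nonincreasing in the number of
reconfigurations: `L_n(d+1) ≤ L_n(d)` for every `d ≥ 1`. -/
theorem lowerBound_antitone (n : ℕ) (hn : 2 ≤ n) (d : ℕ) (hd : 1 ≤ d) :
    lowerBound n (d + 1) ≤ lowerBound n d := by
  have h1 := sum_div_eq d hd (n - 1)
  have h2 := sum_div_eq (d + 1) (by omega) (n - 1)
  unfold lowerBound
  rw [← h1, ← h2]
  refine Finset.sum_le_sum fun j _ => ?_
  exact Nat.add_le_add_right (Nat.div_le_div_left (Nat.le_succ d) hd) 1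
end
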